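/- For every τ ∈ (0, 1/4), with c = −(243(1−4τ)²/64)^{1/3} (real cube root), the polynomial identity 4(3z⁴ − 3z − c)³ − 27(−2z⁶ + 3z³ + cz² − 3τ)² = (243/256)·q₁(z)·q₂(z)² holds for all z ∈ ℂ. -/

import Mathlib

noncomputable section

/-- The constant `c = −(243(1−4τ)²/64)^{1/3}` (real cube root). -/
def ccf (τ : ℝ) : ℝ := -(243 * (1 - 4 * τ) ^ 2 / 64) ^ ((1 : ℝ) / 3)

/-- `R(z) = 3z⁴ − 3z − c`. -/
def RR (τ : ℝ) (z : ℂ) : ℂ := 3 * z ^ 4 - 3 * z - (ccf τ : ℂ)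

/-- `D(z) = −2z⁶ + 3z³ + cz² − 3τ`. -/
def DD (τ : ℝ) (z : ℂ) : ℂ :=
  -2 * z ^ 6 + 3 * z ^ 3 + (ccf τ : ℂ) * z ^ 2 - 3 * (τ : ℂ)

/-- The quartic `q₁`. -/
def q1 (τ : ℝ) (z : ℂ) : ℂ :=
  ((256 / (3 : ℝ) ^ ((5 : ℝ) / 3) * (1 - 4 * τ) ^ ((1 : ℝ) / 3) : ℝ) : ℂ) * z ^ 4
    + (128 / 9 : ℂ) * z ^ 3
    + ((16 / (3 : ℝ) ^ ((1 : ℝ) / 3) * (1 - 4 * τ) ^ ((2 : ℝ) / 3) : ℝ) : ℂ) * z ^ 2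
    - ((32 * (3 : ℝ) ^ ((1 : ℝ) / 3) * (1 - 4 * τ) ^ ((1 : ℝ) / 3) : ℝ) : ℂ) * z
    + ((16 * (1 - 8 * τ) : ℝ) : ℂ)

/-- The linear factor `q₂`. -/
def q2 (τ : ℝ) (z : ℂ) : ℂ :=
  (((3 : ℝ) ^ ((1 : ℝ) / 3) * (1 - 4 * τ) ^ ((1 : ℝ) / 3) : ℝ) : ℂ) * z - 1

/-- The double point `b_* = (3(1−4τ))^{−1/3}`. -/
def bstar (τ : ℝ) : ℝ := (3 * (1 - 4 * τ)) ^ (-(1 : ℝ) / 3)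

/-! Put `u = (3(1−4τ))^{1/3}`, the slope of `q₂`. Then `c = −3u²/4` and, after rewriting `3^{5/3}`
and `(1−4τ)^{2/3}` through the two cube roots, the coefficients of `q₁` are polynomials in `u`.
Eliminating `τ = (3 − u³)/12`, both sides become polynomials in `u` and `z`, and they coincide. -/

def cbrtScale (τ : ℝ) : ℝ := (3 : ℝ) ^ ((1 : ℝ) / 3) * (1 - 4 * τ) ^ ((1 : ℝ) / 3)

theorem discriminant_identity {K : Type*} [Field K] [CharZero K] (u t z : K)
    (hu : u ^ 3 = 3 * (1 - 4 * t)) :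
    4 * (3 * z ^ 4 - 3 * z + 3 / 4 * u ^ 2) ^ 3
        - 27 * (-2 * z ^ 6 + 3 * z ^ 3 - 3 / 4 * u ^ 2 * z ^ 2 - 3 * t) ^ 2
      = 243 / 256 * (256 / 9 * u * z ^ 4 + 128 / 9 * z ^ 3 + 16 / 3 * u ^ 2 * z ^ 2
          - 32 * u * z + 16 * (1 - 8 * t)) * (u * z - 1) ^ 2 := by
  obtain rfl : t = (3 - u ^ 3) / 12 := by linear_combination hu / 12
  ring

theorem Real.rpow_one_div_three_pow {x : ℝ} (hx : 0 ≤ x) (n : ℕ) :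
    (x ^ ((1 : ℝ) / 3)) ^ n = x ^ ((n : ℝ) / 3) := by
  rw [← Real.rpow_natCast, ← Real.rpow_mul hx, one_div_mul_eq_div]

section

variable {τ : ℝ} (hτ : τ < 1 / 4)
include hτ

theorem cbrtScale_pow_three : cbrtScale τ ^ 3 = 3 * (1 - 4 * τ) := by
  rw [cbrtScale, mul_pow, Real.rpow_one_div_three_pow (by norm_num),
    Real.rpow_one_div_three_pow (by linarith)]
  norm_num

theorem ccf_eq : ccf τ = -(3 / 4 * cbrtScale τ ^ 2) := by
  have hcube : (3 / 4 * cbrtScale τ ^ 2) ^ 3 = 243 * (1 - 4 * τ) ^ 2 / 64 := by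
    linear_combination (27 / 64 * (cbrtScale τ ^ 3 + 3 * (1 - 4 * τ))) * cbrtScale_pow_three hτ
  rw [ccf, ← hcube, one_div, ← Nat.cast_ofNat,
    Real.pow_rpow_inv_natCast (by positivity) (by norm_num)]

theorem q1_eq (z : ℂ) :
    q1 τ z = 256 / 9 * cbrtScale τ * z ^ 4 + 128 / 9 * z ^ 3 + 16 / 3 * cbrtScale τ ^ 2 * z ^ 2
      - 32 * cbrtScale τ * z + 16 * (1 - 8 * τ) := by
  set a : ℝ := (3 : ℝ) ^ ((1 : ℝ) / 3)
  set b : ℝ := (1 - 4 * τ) ^ ((1 : ℝ) / 3)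
  have ha : 0 < a := by positivity
  have ha3 : a ^ 3 = 3 := by rw [Real.rpow_one_div_three_pow (by norm_num)]; norm_num
  have h5 : (3 : ℝ) ^ ((5 : ℝ) / 3) = a ^ 5 := by
    rw [Real.rpow_one_div_three_pow (by norm_num)]; norm_num
  have h2 : (1 - 4 * τ) ^ ((2 : ℝ) / 3) = b ^ 2 := by
    rw [Real.rpow_one_div_three_pow (by linarith)]; norm_num
  have hz4 : 256 / (3 : ℝ) ^ ((5 : ℝ) / 3) * b = 256 / 9 * (a * b) := by
    rw [h5]; field_simp; linear_combination (-b * (a ^ 3 + 3)) * ha3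
  have hz2 : 16 / a * (1 - 4 * τ) ^ ((2 : ℝ) / 3) = 16 / 3 * (a * b) ^ 2 := by
    rw [h2]; field_simp; linear_combination (-b ^ 2) * ha3
  rw [q1, hz4, hz2, cbrtScale]
  push_cast
  ring

end

/-- For every `τ ∈ (0, 1/4)`, with `c = −(243(1−4τ)²/64)^{1/3}`, the
polynomial identity `4R(z)³ − 27D(z)² = (243/256)·q₁(z)·q₂(z)²` holds for all `z ∈ ℂ`. -/
theorem discriminant_factorization (τ : ℝ) (hτ : τ ∈ Set.Ioo (0 : ℝ) (1 / 4)) (z : ℂ) :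
    4 * RR τ z ^ 3 - 27 * DD τ z ^ 2 = (243 / 256) * q1 τ z * q2 τ z ^ 2 := by
  have hu : (cbrtScale τ : ℂ) ^ 3 = 3 * (1 - 4 * τ) := by
    exact_mod_cast cbrtScale_pow_three hτ.2
  rw [RR, DD, q1_eq hτ.2, q2, ccf_eq hτ.2, ← cbrtScale]
  push_cast
  linear_combination discriminant_identity _ _ z hu
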